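/- arXiv:0807.4008 — 2 statements merged into one kernel-verified Lean document; each statement's English description precedes it below -/
import Mathlib

section
/- Distribution relation: let n ≥ 1 be an integer, s ∈ ℂ with Re s > 1, and let T ⊂ ℂ be a complete set of representatives of the quotient group ((1/n)·Γ)/Γ. Then ∑_{z∈T} ∑_{γ∈Γ∖{0}} ⟨γ,z⟩·|γ|^{−2s} = n^{2−2s}·∑_{γ∈Γ∖{0}} |γ|^{−2s}. -/
/-!
For `γ = pω₁ + qω₂ ∈ Γ`, `z ↦ ⟨γ, z⟩` is a character of `(1/n)Γ` trivial on `Γ`; at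
`z = (aω₁ + bω₂)/n` it equals `exp (±2πi (qa - pb)/n)`, the sign being that of
`Im (conj ω₁ * ω₂)`, so it is trivial on `(1/n)Γ` exactly when `γ ∈ nΓ`. A translate of a
transversal of `((1/n)Γ)/Γ` is again one, and all transversals have as many elements as the explicit
one `{(aω₁ + bω₂)/n : 0 ≤ a, b < n}`; hence `∑_{z ∈ T} ⟨γ, z⟩` is `n²` on `nΓ` and `0` off it.
The left side therefore collapses to `n² ∑_{δ ∈ Γ∖0} |nδ|^{-2s}`. When the series diverges both
sides are `0` by the `tsum` convention, because `|⟨γ, z⟩| = 1`.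
-/

open Complex

open ComplexConjugate

structure IsTransversal {G : Type*} [AddCommGroup G] (Γ K : AddSubgroup G) (T : Finset G) :
    Prop where
  mem : ∀ z ∈ T, z ∈ K
  eq_of_sub_mem : ∀ z ∈ T, ∀ w ∈ T, z - w ∈ Γ → z = w
  exists_sub_mem : ∀ z ∈ K, ∃ w ∈ T, z - w ∈ Γ

namespace IsTransversal

variable {G M : Type*} [AddCommGroup G] {Γ K : AddSubgroup G} {T T' : Finset G}

theorem sum_eq [AddCommMonoid M] (hT : IsTransversal Γ K T) (hT' : IsTransversal Γ K T')
    {f : G → M} (hf : ∀ x, ∀ δ ∈ Γ, f (x + δ) = f x) : ∑ z ∈ T, f z = ∑ z ∈ T', f z := by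
  choose! r hrT hrΓ using hT'.exists_sub_mem
  refine Finset.sum_bij (fun z _ => r z) (fun z hz => hrT z (hT.mem z hz)) ?_ ?_ ?_
  · intro z hz w hw hzw
    refine hT.eq_of_sub_mem z hz w hw ?_
    simpa [hzw] using Γ.sub_mem (hrΓ z (hT.mem z hz)) (hrΓ w (hT.mem w hw))
  · intro w hw
    obtain ⟨z, hz, hwz⟩ := hT.exists_sub_mem w (hT'.mem w hw)
    refine ⟨z, hz, hT'.eq_of_sub_mem _ (hrT z (hT.mem z hz)) w hw ?_⟩
    simpa using Γ.neg_mem (Γ.add_mem (hrΓ z (hT.mem z hz)) hwz)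
  · intro z hz
    simpa using hf (r z) (z - r z) (hrΓ z (hT.mem z hz))

theorem card_eq (hT : IsTransversal Γ K T) (hT' : IsTransversal Γ K T') : T.card = T'.card := by
  rw [Finset.card_eq_sum_ones, Finset.card_eq_sum_ones]
  exact hT.sum_eq hT' fun _ _ _ => rfl

theorem map_addRight (hT : IsTransversal Γ K T) {z₀ : G} (hz₀ : z₀ ∈ K) :
    IsTransversal Γ K (T.map (addRightEmbedding z₀)) where
  mem := by
    simpa using fun z hz => K.add_mem (hT.mem z hz) hz₀
  eq_of_sub_mem := by
    simpa using fun z hz w hw h => hT.eq_of_sub_mem z hz w hw h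
  exists_sub_mem z hz := by
    obtain ⟨w, hw, hzw⟩ := hT.exists_sub_mem (z - z₀) (K.sub_mem hz hz₀)
    exact ⟨w + z₀, by simpa using hw, by rwa [add_comm, ← sub_sub]⟩

theorem sum_addChar_eq_zero {R : Type*} [CommRing R] [IsDomain R] (hT : IsTransversal Γ K T)
    (χ : AddChar G R) (hχ : ∀ δ ∈ Γ, χ δ = 1) {z₀ : G} (hz₀ : z₀ ∈ K) (hχz₀ : χ z₀ ≠ 1) :
    ∑ z ∈ T, χ z = 0 := by
  have hshift : χ z₀ * ∑ z ∈ T, χ z = ∑ z ∈ T, χ z :=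
    calc χ z₀ * ∑ z ∈ T, χ z = ∑ z ∈ T.map (addRightEmbedding z₀), χ z := by
          simp [Finset.mul_sum, AddChar.map_add_eq_mul, mul_comm]
      _ = ∑ z ∈ T, χ z := (hT.map_addRight hz₀).sum_eq hT fun x δ hδ => by
          rw [AddChar.map_add_eq_mul, hχ δ hδ, mul_one]
  have : (χ z₀ - 1) * ∑ z ∈ T, χ z = 0 := by rw [sub_mul, hshift, one_mul, sub_self]
  exact (mul_eq_zero.mp this).resolve_left (sub_ne_zero.mpr hχz₀)

end IsTransversal

section Lattice

variable {ω₁ ω₂ : ℂ}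

theorem mem_closure_pair_iff_exists_intCast {γ : ℂ} :
    γ ∈ AddSubgroup.closure {ω₁, ω₂} ↔ ∃ p q : ℤ, (p : ℂ) * ω₁ + q * ω₂ = γ := by
  simp only [AddSubgroup.mem_closure_pair, zsmul_eq_mul]

theorem eq_of_intCast_mul_add_mul_eq (h : LinearIndependent ℝ ![ω₁, ω₂]) {p q p' q' : ℤ}
    (he : (p : ℂ) * ω₁ + q * ω₂ = p' * ω₁ + q' * ω₂) : p = p' ∧ q = q' := by
  have := LinearIndependent.pair_iff.mp h (p - p') (q - q') (by
    simp only [Complex.real_smul]; push_cast; linear_combination he)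
  exact ⟨by exact_mod_cast sub_eq_zero.mp this.1, by exact_mod_cast sub_eq_zero.mp this.2⟩

theorem im_conj_mul_ne_zero (h : LinearIndependent ℝ ![ω₁, ω₂]) : (conj ω₁ * ω₂).im ≠ 0 := by
  intro hE
  have hω₁ : ω₁ ≠ 0 := h.ne_zero 0
  -- `conj ω₁ * ω₂` is real, so `ω₁` and `ω₂` are proportional
  have hreal : conj ω₁ * ω₂ = (conj ω₁ * ω₂).re := Complex.ext rfl (by simp [hE])
  have := LinearIndependent.pair_iff.mp h (conj ω₁ * ω₂).re (-normSq ω₁) (by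
    rw [Complex.real_smul, Complex.real_smul, ← hreal, ofReal_neg, ← mul_conj]; ring)
  exact hω₁ (normSq_eq_zero.mp (neg_eq_zero.mp this.2))

theorem im_mul_conj_intCast (p q a b : ℤ) :
    (((p : ℂ) * ω₁ + q * ω₂) * conj ((a : ℂ) * ω₁ + b * ω₂)).im
      = (q * a - p * b : ℤ) * (conj ω₁ * ω₂).im := by
  simp only [map_add, map_mul, map_intCast, mul_im, mul_re, add_im, add_re, conj_re, conj_im,
    intCast_re, intCast_im]
  push_cast
  ring

end Lattice

noncomputable def pairing (A : ℝ) (γ : ℂ) : AddChar ℂ ℂ where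
  toFun z := exp ((γ * conj z - z * conj γ) / A)
  map_zero_eq_one' := by simp
  map_add_eq_mul' z w := by
    rw [← exp_add]
    congr 1
    rw [map_add]
    ring

theorem pairing_apply (A : ℝ) (γ z : ℂ) :
    pairing A γ z = exp (((2 * (γ * conj z).im / A : ℝ) : ℂ) * I) := by
  have h : γ * conj z - z * conj γ = γ * conj z - conj (γ * conj z) := by
    rw [map_mul, conj_conj]
    ring
  change exp _ = _
  rw [h, sub_conj]
  push_cast
  ring_nf

theorem norm_pairing (A : ℝ) (γ z : ℂ) : ‖pairing A γ z‖ = 1 := by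
  rw [pairing_apply, norm_exp_ofReal_mul_I]

theorem pairing_eq_one_iff {c : ℝ} (hc : c ≠ 0) (γ z : ℂ) :
    pairing (|c| / Real.pi) γ z = 1 ↔ ∃ k : ℤ, (γ * conj z).im = k * c := by
  have hexp : ∀ k : ℤ, ((2 * (γ * conj z).im / (|c| / Real.pi) : ℝ) : ℂ) * I
      = k * (2 * Real.pi * I) ↔ (γ * conj z).im = k * |c| := by
    intro k
    rw [show (k : ℂ) * (2 * Real.pi * I) = ((k * (2 * Real.pi) : ℝ) : ℂ) * I by push_cast; ring,
      mul_left_inj' I_ne_zero, ofReal_inj]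
    have := abs_pos.mpr hc
    field_simp
  rw [pairing_apply, exp_eq_one_iff]
  simp only [hexp]
  rcases abs_choice c with h | h <;> rw [h]
  exact ⟨fun ⟨k, hk⟩ => ⟨-k, by rw [hk]; push_cast; ring⟩,
    fun ⟨k, hk⟩ => ⟨-k, by rw [hk]; push_cast; ring⟩⟩

theorem pairing_intCast_div_eq_one_iff {ω₁ ω₂ : ℂ} (hE : (conj ω₁ * ω₂).im ≠ 0) {n : ℕ}
    (hn : n ≠ 0) (p q a b : ℤ) :
    pairing (|(conj ω₁ * ω₂).im| / Real.pi) ((p : ℂ) * ω₁ + q * ω₂) (((a : ℂ) * ω₁ + b * ω₂) / n)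
      = 1 ↔ (n : ℤ) ∣ q * a - p * b := by
  rw [pairing_eq_one_iff hE, map_div₀, map_natCast, ← mul_div_assoc, div_natCast_im,
    im_mul_conj_intCast]
  have hn' : (n : ℝ) ≠ 0 := Nat.cast_ne_zero.mpr hn
  refine exists_congr fun k => ?_
  set E := (conj ω₁ * ω₂).im
  rw [div_eq_iff hn', show k * E * n = ((n * k : ℤ) : ℝ) * E by push_cast; ring,
    mul_left_inj' hE, Int.cast_inj]

section Transversal

variable {ω₁ ω₂ : ℂ} {n : ℕ}

noncomputable def fracReps (ω₁ ω₂ : ℂ) (n : ℕ) : Finset ℂ :=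
  (Finset.Ico 0 (n : ℤ) ×ˢ Finset.Ico 0 (n : ℤ)).image
    fun ab => ((ab.1 : ℂ) * ω₁ + ab.2 * ω₂) / n

theorem eq_of_mem_Ico_of_dvd_sub {a a' : ℤ} (ha : a ∈ Finset.Ico 0 (n : ℤ))
    (ha' : a' ∈ Finset.Ico 0 (n : ℤ)) (h : (n : ℤ) ∣ a - a') : a = a' := by
  rw [Finset.mem_Ico] at ha ha'
  exact sub_eq_zero.mp (Int.eq_zero_of_abs_lt_dvd h (abs_sub_lt_iff.mpr ⟨by omega, by omega⟩))

theorem intCast_div_mem_comap_mulLeft (hn : n ≠ 0) (a b : ℤ) :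
    ((a : ℂ) * ω₁ + b * ω₂) / n
      ∈ (AddSubgroup.closure {ω₁, ω₂}).comap (AddMonoidHom.mulLeft (n : ℂ)) := by
  rw [AddSubgroup.mem_comap, AddMonoidHom.coe_mulLeft, mul_div_cancel₀ _ (Nat.cast_ne_zero.mpr hn)]
  exact mem_closure_pair_iff_exists_intCast.mpr ⟨a, b, rfl⟩

theorem isTransversal_fracReps (h : LinearIndependent ℝ ![ω₁, ω₂]) (hn : n ≠ 0) :
    IsTransversal (AddSubgroup.closure {ω₁, ω₂})
      ((AddSubgroup.closure {ω₁, ω₂}).comap (AddMonoidHom.mulLeft (n : ℂ)))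
      (fracReps ω₁ ω₂ n) where
  mem := by
    simp only [fracReps, Finset.mem_image]
    rintro _ ⟨⟨a, b⟩, -, rfl⟩
    exact intCast_div_mem_comap_mulLeft hn a b
  eq_of_sub_mem := by
    simp only [fracReps, Finset.mem_image, Finset.mem_product]
    rintro _ ⟨⟨a, b⟩, ⟨ha, hb⟩, rfl⟩ _ ⟨⟨a', b'⟩, ⟨ha', hb'⟩, rfl⟩ hmem
    dsimp only at ha hb ha' hb' hmem
    obtain ⟨c, d, hcd⟩ := mem_closure_pair_iff_exists_intCast.mp hmem
    have hn' : (n : ℂ) ≠ 0 := Nat.cast_ne_zero.mpr hn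
    obtain ⟨hc, hd⟩ := eq_of_intCast_mul_add_mul_eq h (p := a - a') (q := b - b') (p' := n * c)
      (q' := n * d) (by
        rw [← sub_div, eq_div_iff hn'] at hcd
        push_cast
        linear_combination -hcd)
    rw [eq_of_mem_Ico_of_dvd_sub ha ha' ⟨c, hc⟩, eq_of_mem_Ico_of_dvd_sub hb hb' ⟨d, hd⟩]
  exists_sub_mem z hz := by
    obtain ⟨a, b, hab⟩ := mem_closure_pair_iff_exists_intCast.mp hz
    have hn' : (n : ℤ) ≠ 0 := Nat.cast_ne_zero.mpr hn
    refine ⟨((a % n : ℤ) * ω₁ + (b % n : ℤ) * ω₂) / n, ?_, ?_⟩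
    · refine Finset.mem_image.mpr ⟨(a % n, b % n), ?_, rfl⟩
      simp only [Finset.mem_product, Finset.mem_Ico]
      exact ⟨⟨Int.emod_nonneg _ hn', Int.emod_lt_of_pos _ (by omega)⟩,
        ⟨Int.emod_nonneg _ hn', Int.emod_lt_of_pos _ (by omega)⟩⟩
    · refine mem_closure_pair_iff_exists_intCast.mpr ⟨a / n, b / n, ?_⟩
      rw [AddMonoidHom.coe_mulLeft] at hab
      have ha : ((a % n : ℤ) : ℂ) + n * (a / n : ℤ) = a := by
        exact_mod_cast Int.emod_add_mul_ediv a n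
      have hb : ((b % n : ℤ) : ℂ) + n * (b / n : ℤ) = b := by
        exact_mod_cast Int.emod_add_mul_ediv b n
      field_simp
      linear_combination hab + ω₁ * ha + ω₂ * hb

theorem card_fracReps (h : LinearIndependent ℝ ![ω₁, ω₂]) (hn : n ≠ 0) :
    (fracReps ω₁ ω₂ n).card = n ^ 2 := by
  rw [fracReps, Finset.card_image_of_injective, Finset.card_product, Int.card_Ico, sq]
  · simp
  · rintro ⟨a, b⟩ ⟨a', b'⟩ hab
    rw [div_left_inj' (Nat.cast_ne_zero.mpr hn)] at hab
    obtain ⟨rfl, rfl⟩ := eq_of_intCast_mul_add_mul_eq h hab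
    rfl

end Transversal

section CharacterSum

variable {ω₁ ω₂ : ℂ} {n : ℕ} {T : Finset ℂ}

theorem pairing_eq_one_of_mem_closure (hE : (conj ω₁ * ω₂).im ≠ 0) {γ δ : ℂ}
    (hγ : γ ∈ AddSubgroup.closure {ω₁, ω₂}) (hδ : δ ∈ AddSubgroup.closure {ω₁, ω₂}) :
    pairing (|(conj ω₁ * ω₂).im| / Real.pi) γ δ = 1 := by
  obtain ⟨p, q, rfl⟩ := mem_closure_pair_iff_exists_intCast.mp hγ
  obtain ⟨a, b, rfl⟩ := mem_closure_pair_iff_exists_intCast.mp hδ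
  exact (pairing_eq_one_iff hE _ _).mpr ⟨_, im_mul_conj_intCast p q a b⟩

theorem sum_pairing_natCast_mul (h : LinearIndependent ℝ ![ω₁, ω₂]) (hn : n ≠ 0)
    (hT : IsTransversal (AddSubgroup.closure {ω₁, ω₂})
      ((AddSubgroup.closure {ω₁, ω₂}).comap (AddMonoidHom.mulLeft (n : ℂ))) T)
    {δ : ℂ} (hδ : δ ∈ AddSubgroup.closure {ω₁, ω₂}) :
    ∑ z ∈ T, pairing (|(conj ω₁ * ω₂).im| / Real.pi) (n * δ) z = n ^ 2 := by
  have hone : ∀ z ∈ T, pairing (|(conj ω₁ * ω₂).im| / Real.pi) (n * δ) z = 1 := by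
    intro z hz
    obtain ⟨a, b, hab⟩ := mem_closure_pair_iff_exists_intCast.mp (hT.mem z hz)
    obtain ⟨c, d, rfl⟩ := mem_closure_pair_iff_exists_intCast.mp hδ
    rw [AddMonoidHom.coe_mulLeft] at hab
    rw [eq_div_of_mul_eq (Nat.cast_ne_zero.mpr hn) (hab.trans (mul_comm _ _)).symm,
      show (n : ℂ) * (c * ω₁ + d * ω₂) = (n * c : ℤ) * ω₁ + (n * d : ℤ) * ω₂ by push_cast; ring,
      pairing_intCast_div_eq_one_iff (im_conj_mul_ne_zero h) hn]
    exact ⟨d * a - c * b, by ring⟩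
  rw [Finset.sum_congr rfl hone, Finset.sum_const, nsmul_one,
    hT.card_eq (isTransversal_fracReps h hn), card_fracReps h hn]
  norm_cast

theorem sum_pairing_eq_zero (h : LinearIndependent ℝ ![ω₁, ω₂]) (hn : n ≠ 0)
    (hT : IsTransversal (AddSubgroup.closure {ω₁, ω₂})
      ((AddSubgroup.closure {ω₁, ω₂}).comap (AddMonoidHom.mulLeft (n : ℂ))) T)
    {γ : ℂ} (hγ : γ ∈ AddSubgroup.closure {ω₁, ω₂})
    (hγn : ∀ δ ∈ AddSubgroup.closure {ω₁, ω₂}, γ ≠ n * δ) :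
    ∑ z ∈ T, pairing (|(conj ω₁ * ω₂).im| / Real.pi) γ z = 0 := by
  have hE := im_conj_mul_ne_zero h
  obtain ⟨p, q, rfl⟩ := mem_closure_pair_iff_exists_intCast.mp hγ
  have hpq : ¬((n : ℤ) ∣ p ∧ (n : ℤ) ∣ q) := by
    rintro ⟨⟨c, rfl⟩, ⟨d, rfl⟩⟩
    exact hγn _ (mem_closure_pair_iff_exists_intCast.mpr ⟨c, d, rfl⟩) (by push_cast; ring)
  obtain ⟨a, b, hab⟩ : ∃ a b : ℤ, ¬(n : ℤ) ∣ q * a - p * b := by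
    rcases not_and_or.mp hpq with hp | hq
    · exact ⟨0, 1, by simpa using hp⟩
    · exact ⟨1, 0, by simpa using hq⟩
  exact hT.sum_addChar_eq_zero _ (fun δ hδ => pairing_eq_one_of_mem_closure hE hγ hδ)
    (intCast_div_mem_comap_mulLeft hn a b)
    ((pairing_intCast_div_eq_one_iff hE hn p q a b).not.mpr hab)

end CharacterSum

theorem tsum_sum_pairing_mul {ω₁ ω₂ : ℂ} (h : LinearIndependent ℝ ![ω₁, ω₂]) {n : ℕ} (hn : n ≠ 0)
    {T : Finset ℂ} (hT : IsTransversal (AddSubgroup.closure {ω₁, ω₂})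
      ((AddSubgroup.closure {ω₁, ω₂}).comap (AddMonoidHom.mulLeft (n : ℂ))) T) (f : ℂ → ℂ) :
    ∑' γ : {γ : ℂ // γ ∈ AddSubgroup.closure {ω₁, ω₂} ∧ γ ≠ 0},
        (∑ z ∈ T, pairing (|(conj ω₁ * ω₂).im| / Real.pi) γ z) * f γ
      = n ^ 2 * ∑' δ : {γ : ℂ // γ ∈ AddSubgroup.closure {ω₁, ω₂} ∧ γ ≠ 0}, f (n * δ) := by
  have hn' : (n : ℂ) ≠ 0 := Nat.cast_ne_zero.mpr hn
  let ι : {γ : ℂ // γ ∈ AddSubgroup.closure {ω₁, ω₂} ∧ γ ≠ 0} →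
      {γ : ℂ // γ ∈ AddSubgroup.closure {ω₁, ω₂} ∧ γ ≠ 0} := fun δ =>
    ⟨n * δ, by simpa using AddSubgroup.nsmul_mem _ δ.2.1 n, mul_ne_zero hn' δ.2.2⟩
  have hι : Function.Injective ι := fun δ δ' hδδ' =>
    Subtype.ext (mul_left_cancel₀ hn' (congrArg Subtype.val hδδ'))
  have hsupp : Function.support (fun γ : {γ : ℂ // γ ∈ AddSubgroup.closure {ω₁, ω₂} ∧ γ ≠ 0} =>
      (∑ z ∈ T, pairing (|(conj ω₁ * ω₂).im| / Real.pi) γ z) * f γ) ⊆ Set.range ι := by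
    intro γ hγ
    by_contra hγι
    simp only [Function.mem_support] at hγ
    refine hγ ?_
    rw [sum_pairing_eq_zero h hn hT γ.2.1, zero_mul]
    rintro δ hδ hγδ
    have hδ0 : δ ≠ 0 := by rintro rfl; exact γ.2.2 (by simpa using hγδ)
    exact hγι ⟨⟨δ, hδ, hδ0⟩, Subtype.ext hγδ.symm⟩
  rw [← hι.tsum_eq hsupp, ← tsum_mul_left]
  exact tsum_congr fun δ => by rw [sum_pairing_natCast_mul h hn hT δ.2.1]

theorem summable_mul_iff_of_norm_eq_one {ι : Type*} {u f : ι → ℂ} (hu : ∀ i, ‖u i‖ = 1) :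
    Summable (fun i => u i * f i) ↔ Summable f := by
  simp_rw [← summable_norm_iff (E := ℂ), norm_mul, hu, one_mul]

theorem natCast_sq_mul_norm_natCast_mul_cpow {n : ℕ} (hn : n ≠ 0) (δ s : ℂ) :
    (n : ℂ) ^ 2 * (‖(n : ℂ) * δ‖ : ℂ) ^ (-2 * s)
      = (n : ℂ) ^ (2 - 2 * s) * (‖δ‖ : ℂ) ^ (-2 * s) := by
  rw [norm_mul, norm_natCast, ofReal_mul, mul_cpow_ofReal_nonneg n.cast_nonneg (norm_nonneg δ),
    ofReal_natCast, sub_eq_add_neg, ← neg_mul, cpow_add _ _ (Nat.cast_ne_zero.mpr hn)]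
  norm_cast
  ring

theorem eisenstein_distribution_relation_general
    (ω₁ ω₂ : ℂ) (hindep : LinearIndependent ℝ ![ω₁, ω₂])
    (Γ : AddSubgroup ℂ) (hΓ : Γ = AddSubgroup.closure {ω₁, ω₂})
    (A : ℝ) (hA : A = |((starRingEnd ℂ) ω₁ * ω₂).im| / Real.pi)
    (pair : ℂ → ℂ → ℂ)
    (hpair : ∀ z w : ℂ, pair z w =
      Complex.exp ((z * (starRingEnd ℂ) w - w * (starRingEnd ℂ) z) / A))
    (n : ℕ) (hn : 1 ≤ n) (s : ℂ)
    (T : Finset ℂ)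
    (hT1 : ∀ z ∈ T, (n : ℂ) * z ∈ Γ)
    (hT2 : ∀ z ∈ T, ∀ w ∈ T, z - w ∈ Γ → z = w)
    (hT3 : ∀ z : ℂ, (n : ℂ) * z ∈ Γ → ∃ w ∈ T, z - w ∈ Γ) :
    ∑ z ∈ T, ∑' γ : {γ : ℂ // γ ∈ Γ ∧ γ ≠ 0},
        pair (γ : ℂ) z * ((‖(γ : ℂ)‖ : ℂ) ^ (-2 * s))
      = (n : ℂ) ^ (2 - 2 * s) *
          ∑' γ : {γ : ℂ // γ ∈ Γ ∧ γ ≠ 0}, (‖(γ : ℂ)‖ : ℂ) ^ (-2 * s) := by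
  subst hΓ hA
  have hpairing : ∀ γ z, pair γ z = pairing (|(conj ω₁ * ω₂).im| / Real.pi) γ z := hpair
  simp_rw [hpairing]
  have hn0 : n ≠ 0 := by omega
  have hT : IsTransversal _ ((AddSubgroup.closure {ω₁, ω₂}).comap
      (AddMonoidHom.mulLeft (n : ℂ))) T := ⟨hT1, hT2, hT3⟩
  have hsummable (z : ℂ) := summable_mul_iff_of_norm_eq_one (f := fun γ :
    {γ : ℂ // γ ∈ AddSubgroup.closure {ω₁, ω₂} ∧ γ ≠ 0} => (‖(γ : ℂ)‖ : ℂ) ^ (-2 * s))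
    fun γ => norm_pairing (|(conj ω₁ * ω₂).im| / Real.pi) γ z
  by_cases hf : Summable fun γ : {γ : ℂ // γ ∈ AddSubgroup.closure {ω₁, ω₂} ∧ γ ≠ 0} =>
    (‖(γ : ℂ)‖ : ℂ) ^ (-2 * s)
  · rw [← Summable.tsum_finsetSum fun z _ => (hsummable z).mpr hf]
    simp_rw [← Finset.sum_mul]
    rw [tsum_sum_pairing_mul hindep hn0 hT fun γ => (‖γ‖ : ℂ) ^ (-2 * s), ← tsum_mul_left,
      ← tsum_mul_left]
    exact tsum_congr fun δ => natCast_sq_mul_norm_natCast_mul_cpow hn0 δ s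
  · rw [tsum_eq_zero_of_not_summable hf, mul_zero]
    exact Finset.sum_eq_zero fun z _ => tsum_eq_zero_of_not_summable (mt (hsummable z).mp hf)

/-- Distribution relation: for `Re s > 1` and `T` a complete set of representatives of
`((1/n)Γ)/Γ`, `∑_{z ∈ T} ∑_{γ ∈ Γ \ {0}} ⟨γ,z⟩ |γ|^(-2s) = n^(2-2s) ∑_{γ ∈ Γ \ {0}} |γ|^(-2s)`. -/
theorem eisenstein_distribution_relation
    (ω₁ ω₂ : ℂ) (hindep : LinearIndependent ℝ ![ω₁, ω₂])
    (Γ : AddSubgroup ℂ) (hΓ : Γ = AddSubgroup.closure {ω₁, ω₂})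
    (A : ℝ) (hA : A = |((starRingEnd ℂ) ω₁ * ω₂).im| / Real.pi)
    (pair : ℂ → ℂ → ℂ)
    (hpair : ∀ z w : ℂ, pair z w =
      Complex.exp ((z * (starRingEnd ℂ) w - w * (starRingEnd ℂ) z) / A))
    (n : ℕ) (hn : 1 ≤ n) (s : ℂ) (hs : 1 < s.re)
    (T : Finset ℂ)
    (hT1 : ∀ z ∈ T, (n : ℂ) * z ∈ Γ)
    (hT2 : ∀ z ∈ T, ∀ w ∈ T, z - w ∈ Γ → z = w)
    (hT3 : ∀ z : ℂ, (n : ℂ) * z ∈ Γ → ∃ w ∈ T, z - w ∈ Γ) :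
    ∑ z ∈ T, ∑' γ : {γ : ℂ // γ ∈ Γ ∧ γ ≠ 0},
        pair (γ : ℂ) z * ((‖(γ : ℂ)‖ : ℂ) ^ (-2 * s))
      = (n : ℂ) ^ (2 - 2 * s) *
          ∑' γ : {γ : ℂ // γ ∈ Γ ∧ γ ≠ 0}, (‖(γ : ℂ)‖ : ℂ) ^ (-2 * s) :=
  eisenstein_distribution_relation_general ω₁ ω₂ hindep Γ hΓ A hA pair hpair n hn s T hT1 hT2 hT3
end

section
/- As real s tends to 1 from the right, (s−1)·∑_{γ∈Γ∖{0}} |γ|^{−2s} tends to 1/A; that is, the Eisenstein series ∑_{γ∈Γ∖{0}} |γ|^{−2s} has residue 1/A at s = 1. -/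
/-!
Let `L` be a lattice in a real normed space `E` of dimension `n`, with a fundamental domain `F`
contained in the closed ball of radius `d`. For `‖γ‖ > R > d` and `x ∈ F` we have
`(1 - d/R) ‖γ‖ ≤ ‖γ + x‖ ≤ (1 + d/R) ‖γ‖`, so `‖γ‖^(-ns) vol F` agrees, up to the factors
`(1 ± d/R)^(ns)`, with the integral of `‖z‖^(-ns)` over `γ + F`. As the translates of `F` tile
`E`, the tail `vol F · ∑_{‖γ‖ > R} ‖γ‖^(-ns)` lies between `(1 - d/R)^(ns)` times the integral
of `‖z‖^(-ns)` over `‖z‖ > R + d` and `(1 + d/R)^(ns)` times the one over `‖z‖ > R - d`, and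
`∫_{‖z‖ > ρ} ‖z‖^(-ns) dz = vol(B) ρ^(n - ns) / (s - 1)`. The finitely many `γ` with
`‖γ‖ ≤ R` contribute a bounded amount as `s → 1`, so every limit point of
`(s - 1) ∑ ‖γ‖^(-ns)` lies between `(1 ∓ d/R)^n vol(B) / vol F`; letting `R → ∞` gives the
residue `vol(B) / covol L`. For `Γ ⊆ ℂ` this is `π / |Im(conj ω₁ ω₂)| = 1 / A`.
-/

open Filter Topology MeasureTheory Metric Set Module
open scoped ENNReal

theorem tendsto_of_tendsto_bounds_atTop {α : Type*} {l : Filter α} {f : α → ℝ} {c : ℝ}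
    {lo hi : ℝ → ℝ} (hlo : Tendsto lo atTop (𝓝 c)) (hhi : Tendsto hi atTop (𝓝 c))
    (hlower : ∀ᶠ R in atTop, ∃ u : α → ℝ, Tendsto u l (𝓝 (lo R)) ∧ ∀ᶠ x in l, u x ≤ f x)
    (hupper : ∀ᶠ R in atTop, ∃ v : α → ℝ, Tendsto v l (𝓝 (hi R)) ∧ ∀ᶠ x in l, f x ≤ v x) :
    Tendsto f l (𝓝 c) := by
  refine tendsto_order.2 ⟨fun a ha => ?_, fun a ha => ?_⟩
  · obtain ⟨R, haR, u, hu, huf⟩ := ((hlo.eventually (lt_mem_nhds ha)).and hlower).exists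
    filter_upwards [hu.eventually (lt_mem_nhds haR), huf] with x h₁ h₂ using h₁.trans_le h₂
  · obtain ⟨R, haR, v, hv, hvf⟩ := ((hhi.eventually (gt_mem_nhds ha)).and hupper).exists
    filter_upwards [hv.eventually (gt_mem_nhds haR), hvf] with x h₁ h₂ using h₂.trans_lt h₁

lemma tendsto_one_add_div_rpow_atTop (c n : ℝ) :
    Tendsto (fun R => (1 + c / R) ^ n) atTop (𝓝 1) := by
  have : Tendsto (fun R => 1 + c / R) atTop (𝓝 1) := by
    simpa using tendsto_const_nhds.add (tendsto_const_nhds.div_atTop (tendsto_id (α := ℝ)))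
  simpa using this.rpow_const (Or.inl one_ne_zero)

lemma tendsto_rpow_mul_rpow_nhds_one {a b : ℝ} (n : ℝ) (ha : 0 < a) (hb : 0 < b) :
    Tendsto (fun s => a ^ (n * s) * b ^ (n - n * s)) (𝓝 1) (𝓝 (a ^ n)) := by
  have : Continuous fun s => a ^ (n * s) * b ^ (n - n * s) := by fun_prop (disch := positivity)
  simpa using this.tendsto 1

lemma tendsto_sub_one_mul_sum_rpow {ι : Type*} (S : Finset ι) (v : ι → ℝ) {a : ℝ} (ha : a ≠ 0) :
    Tendsto (fun s => (s - 1) * ∑ i ∈ S, v i ^ (a * s)) (𝓝 1) (𝓝 0) := by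
  have hsum : Tendsto (fun s => ∑ i ∈ S, v i ^ (a * s)) (𝓝 1) (𝓝 (∑ i ∈ S, v i ^ (a * 1))) :=
    tendsto_finsetSum S fun i _ =>
      (Real.continuousAt_const_rpow' (by simpa using ha)).tendsto.comp
        ((continuous_const_mul a).tendsto 1)
  simpa using ((continuous_sub_right (1 : ℝ)).tendsto 1).mul hsum

lemma rpow_mul_rpow_neg {b c : ℝ} (p : ℝ) (hb : 0 ≤ b) (hc : 0 < c) :
    c ^ p * b ^ (-p) = (b / c) ^ (-p) := by
  rw [Real.div_rpow hb hc.le, Real.rpow_neg hc.le, div_inv_eq_mul, mul_comm]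

lemma tsum_subtype_and_ne_zero {α M : Type*} [Zero α] [AddCommMonoid M] [TopologicalSpace M]
    (s : Set α) {f : α → M} (hf : f 0 = 0) :
    ∑' x : {x : α // x ∈ s ∧ x ≠ 0}, f x = ∑' x : s, f x := by
  refine (tsum_subtype {x | x ∈ s ∧ x ≠ 0} f).trans
    ((tsum_congr fun x => ?_).trans (tsum_subtype s f).symm)
  by_cases hx : x = 0
  · simp [hx, indicator_of_notMem, indicator_apply_eq_zero.2 fun _ => hf]
  · classical
    simp [indicator_apply, hx]

noncomputable def rpowTail (p ρ : ℝ) : ℝ → ℝ := (Ioi ρ).indicator fun r => r ^ (-p)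

lemma rpowTail_nonneg (p ρ : ℝ) {r : ℝ} (hr : 0 ≤ r) : 0 ≤ rpowTail p ρ r :=
  indicator_nonneg (fun _ _ => Real.rpow_nonneg hr _) r

lemma rpowTail_of_lt {p ρ r : ℝ} (h : ρ < r) : rpowTail p ρ r = r ^ (-p) :=
  indicator_of_mem h _

lemma rpowTail_of_le {p ρ r : ℝ} (h : r ≤ ρ) : rpowTail p ρ r = 0 :=
  indicator_of_notMem (not_lt.2 h) _

lemma measurable_rpowTail (p ρ : ℝ) : Measurable (rpowTail p ρ) :=
  (measurable_id.pow_const (-p)).indicator measurableSet_Ioi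

lemma pow_mul_rpowTail_eqOn (p ρ : ℝ) (n : ℕ) :
    EqOn (fun r => r ^ n * rpowTail p ρ r) ((Ioi ρ).indicator fun r => r ^ ((n : ℝ) - p))
      (Ioi 0) := by
  intro r (hr : 0 < r)
  by_cases h : ρ < r
  · simp only [rpowTail_of_lt h, indicator_of_mem (mem_Ioi.2 h)]
    rw [Real.rpow_sub hr, Real.rpow_neg hr.le, Real.rpow_natCast, div_eq_mul_inv]
  · simp [rpowTail_of_le (not_lt.1 h), indicator_of_notMem (notMem_Ioi.2 (not_lt.1 h))]

section Pointwise

variable {E : Type*} [SeminormedAddCommGroup E] {p d R : ℝ} {γ x : E}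

lemma le_div_mul_norm (hR : 0 < R) (hd : 0 ≤ d) (hγ : R < ‖γ‖) : d ≤ d / R * ‖γ‖ := by
  rw [div_mul_eq_mul_div, le_div_iff₀ hR]
  exact mul_le_mul_of_nonneg_left hγ.le hd

lemma rpowTail_norm_le_mul_rpowTail_norm_add (hp : 0 ≤ p) (hdR : d < R) (hx : ‖x‖ ≤ d) :
    rpowTail p R ‖γ‖ ≤ (1 + d / R) ^ p * rpowTail p (R - d) ‖γ + x‖ := by
  have hd : 0 ≤ d := (norm_nonneg x).trans hx
  have hR : 0 < R := hd.trans_lt hdR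
  rcases le_or_gt ‖γ‖ R with hγ | hγ
  · rw [rpowTail_of_le hγ]
    exact mul_nonneg (Real.rpow_nonneg (by positivity) _) (rpowTail_nonneg _ _ (norm_nonneg _))
  have hγx : R - d < ‖γ + x‖ := by linarith [norm_sub_le_norm_add γ x]
  have hδ : 0 < 1 + d / R := by positivity
  rw [rpowTail_of_lt hγ, rpowTail_of_lt hγx, rpow_mul_rpow_neg p (norm_nonneg _) hδ]
  refine Real.rpow_le_rpow_of_nonpos (div_pos (by linarith) hδ) ?_ (neg_nonpos.2 hp)
  rw [div_le_iff₀ hδ]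
  linarith [norm_add_le γ x, le_div_mul_norm hR hd hγ]

lemma mul_rpowTail_norm_add_le_rpowTail_norm (hp : 0 ≤ p) (hdR : d < R) (hx : ‖x‖ ≤ d) :
    (1 - d / R) ^ p * rpowTail p (R + d) ‖γ + x‖ ≤ rpowTail p R ‖γ‖ := by
  have hd : 0 ≤ d := (norm_nonneg x).trans hx
  have hR : 0 < R := hd.trans_lt hdR
  rcases le_or_gt ‖γ + x‖ (R + d) with hγx | hγx
  · rw [rpowTail_of_le hγx, mul_zero]
    exact rpowTail_nonneg _ _ (norm_nonneg _)
  have hγ : R < ‖γ‖ := by linarith [norm_add_le γ x]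
  have hδ : 0 < 1 - d / R := by rw [sub_pos, div_lt_one hR]; exact hdR
  rw [rpowTail_of_lt hγx, rpowTail_of_lt hγ, rpow_mul_rpow_neg p (norm_nonneg _) hδ]
  refine Real.rpow_le_rpow_of_nonpos (hR.trans hγ) ?_ (neg_nonpos.2 hp)
  rw [le_div_iff₀ hδ]
  linarith [norm_sub_le_norm_add γ x, le_div_mul_norm hR hd hγ]

end Pointwise

section FundamentalDomain

variable {G α : Type*} [AddGroup G] [AddAction G α] [MeasurableSpace α] [MeasurableConstVAdd G α]
  [Countable G] {μ : Measure α} [VAddInvariantMeasure G α μ] {F : Set α}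
  {a : G → ℝ≥0∞} {g : α → ℝ≥0∞} {c : ℝ≥0∞}

theorem MeasureTheory.IsAddFundamentalDomain.tsum_mul_measure_le
    (hF : IsAddFundamentalDomain G F μ) (hg : Measurable g)
    (h : ∀ γ : G, ∀ x ∈ F, a γ ≤ c * g (γ +ᵥ x)) :
    (∑' γ, a γ) * μ F ≤ c * ∫⁻ x, g x ∂μ := by
  rw [hF.lintegral_eq_tsum'' g, ← ENNReal.tsum_mul_right, ← ENNReal.tsum_mul_left]
  refine ENNReal.tsum_le_tsum fun γ => ?_
  have hgγ : Measurable fun x => g (γ +ᵥ x) := hg.comp (measurable_const_vadd γ)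
  rw [← setLIntegral_const, ← lintegral_const_mul c hgγ]
  exact setLIntegral_mono (measurable_const.mul hgγ) (h γ)

theorem MeasureTheory.IsAddFundamentalDomain.mul_lintegral_le_tsum_mul_measure
    (hF : IsAddFundamentalDomain G F μ) (hg : Measurable g)
    (h : ∀ γ : G, ∀ x ∈ F, c * g (γ +ᵥ x) ≤ a γ) :
    c * ∫⁻ x, g x ∂μ ≤ (∑' γ, a γ) * μ F := by
  rw [hF.lintegral_eq_tsum'' g, ← ENNReal.tsum_mul_right, ← ENNReal.tsum_mul_left]
  refine ENNReal.tsum_le_tsum fun γ => ?_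
  have hgγ : Measurable fun x => g (γ +ᵥ x) := hg.comp (measurable_const_vadd γ)
  rw [← setLIntegral_const, ← lintegral_const_mul c hgγ]
  exact setLIntegral_mono measurable_const (h γ)

end FundamentalDomain

section TailIntegral

variable {E : Type*} [NormedAddCommGroup E] [NormedSpace ℝ E] [FiniteDimensional ℝ E]
  [Nontrivial E] {p : ℝ}

lemma natCast_finrank_sub_one_sub_lt (hp : finrank ℝ E < p) :
    ((finrank ℝ E - 1 : ℕ) : ℝ) - p < -1 := by
  rw [Nat.cast_sub finrank_pos]
  push_cast
  linarith

variable [MeasurableSpace E] [BorelSpace E] (μ : Measure E) [μ.IsAddHaarMeasure]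

lemma integrable_rpowTail_norm (hp : finrank ℝ E < p) {ρ : ℝ} (hρ : 0 < ρ) :
    Integrable (fun x : E => rpowTail p ρ ‖x‖) μ := by
  rw [integrable_fun_norm_addHaar μ]
  simp only [smul_eq_mul]
  rw [integrableOn_congr_fun (pow_mul_rpowTail_eqOn p ρ _) measurableSet_Ioi,
    integrableOn_indicator_iff measurableSet_Ioi, Ioi_inter_Ioi, max_eq_left hρ.le]
  exact integrableOn_Ioi_rpow_of_lt (natCast_finrank_sub_one_sub_lt hp) hρ

lemma integral_rpowTail_norm (hp : finrank ℝ E < p) {ρ : ℝ} (hρ : 0 < ρ) :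
    ∫ x, rpowTail p ρ ‖x‖ ∂μ =
      finrank ℝ E * μ.real (ball 0 1) * ρ ^ (finrank ℝ E - p) / (p - finrank ℝ E) := by
  rw [integral_fun_norm_addHaar μ]
  simp only [smul_eq_mul]
  rw [setIntegral_congr_fun measurableSet_Ioi (pow_mul_rpowTail_eqOn p ρ _),
    setIntegral_indicator measurableSet_Ioi, Ioi_inter_Ioi, max_eq_right hρ.le,
    integral_Ioi_rpow_of_lt (natCast_finrank_sub_one_sub_lt hp) hρ, Nat.cast_sub finrank_pos,
    nsmul_eq_mul]
  push_cast
  rw [show (finrank ℝ E : ℝ) - 1 - p + 1 = finrank ℝ E - p by ring]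
  have h₁ : (finrank ℝ E : ℝ) - p ≠ 0 := sub_ne_zero.2 hp.ne
  have h₂ : p - finrank ℝ E ≠ 0 := sub_ne_zero.2 hp.ne'
  field_simp
  ring

lemma lintegral_rpowTail_norm (hp : finrank ℝ E < p) {ρ : ℝ} (hρ : 0 < ρ) :
    ∫⁻ x, ENNReal.ofReal (rpowTail p ρ ‖x‖) ∂μ = ENNReal.ofReal
      (finrank ℝ E * μ.real (ball 0 1) * ρ ^ (finrank ℝ E - p) / (p - finrank ℝ E)) := by
  rw [← integral_rpowTail_norm μ hp hρ, ofReal_integral_eq_lintegral_ofReal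
    (integrable_rpowTail_norm μ hp hρ) (ae_of_all _ fun x => rpowTail_nonneg _ _ (norm_nonneg x))]

end TailIntegral

section TailSumLIntegral

variable {E : Type*} [NormedAddCommGroup E] [MeasurableSpace E] [BorelSpace E]
  {μ : Measure E} [μ.IsAddLeftInvariant] {L : AddSubgroup E} [Countable L] {F : Set E}
  {p d R : ℝ}

lemma measurable_ofReal_rpowTail_norm (p ρ : ℝ) :
    Measurable fun x : E => ENNReal.ofReal (rpowTail p ρ ‖x‖) :=
  ((measurable_rpowTail p ρ).comp measurable_norm).ennreal_ofReal

theorem tsum_rpowTail_mul_measure_le (hF : IsAddFundamentalDomain L F μ)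
    (hFd : F ⊆ closedBall 0 d) (hp : 0 ≤ p) (hdR : d < R) :
    (∑' γ : L, ENNReal.ofReal (rpowTail p R ‖(γ : E)‖)) * μ F ≤
      ENNReal.ofReal ((1 + d / R) ^ p) * ∫⁻ x, ENNReal.ofReal (rpowTail p (R - d) ‖x‖) ∂μ := by
  refine hF.tsum_mul_measure_le (measurable_ofReal_rpowTail_norm p _) fun γ x hx => ?_
  have hxd : ‖x‖ ≤ d := mem_closedBall_zero_iff.1 (hFd hx)
  have hd : 0 ≤ d := (norm_nonneg x).trans hxd
  have hR : 0 < R := hd.trans_lt hdR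
  rw [← ENNReal.ofReal_mul (Real.rpow_nonneg (by positivity) _)]
  exact ENNReal.ofReal_le_ofReal (rpowTail_norm_le_mul_rpowTail_norm_add hp hdR hxd)

theorem mul_lintegral_rpowTail_le_tsum_mul_measure (hF : IsAddFundamentalDomain L F μ)
    (hFd : F ⊆ closedBall 0 d) (hp : 0 ≤ p) (hdR : d < R) :
    ENNReal.ofReal ((1 - d / R) ^ p) * ∫⁻ x, ENNReal.ofReal (rpowTail p (R + d) ‖x‖) ∂μ ≤
      (∑' γ : L, ENNReal.ofReal (rpowTail p R ‖(γ : E)‖)) * μ F := by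
  refine hF.mul_lintegral_le_tsum_mul_measure (measurable_ofReal_rpowTail_norm p _)
    fun γ x hx => ?_
  have hxd : ‖x‖ ≤ d := mem_closedBall_zero_iff.1 (hFd hx)
  have hR : 0 < R := ((norm_nonneg x).trans hxd).trans_lt hdR
  have hδ : 0 ≤ 1 - d / R := by rw [sub_nonneg, div_le_one hR]; exact hdR.le
  rw [← ENNReal.ofReal_mul (Real.rpow_nonneg hδ _)]
  exact ENNReal.ofReal_le_ofReal (mul_rpowTail_norm_add_le_rpowTail_norm hp hdR hxd)

end TailSumLIntegral

section TailSum

variable {E : Type*} [NormedAddCommGroup E] [NormedSpace ℝ E] [FiniteDimensional ℝ E]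
  [Nontrivial E] [MeasurableSpace E] [BorelSpace E] {μ : Measure E} [μ.IsAddHaarMeasure]
  {L : AddSubgroup E} [Countable L] {F : Set E} {p d R : ℝ}

theorem tsum_rpowTail_mul_measureReal_mem_Icc (hF : IsAddFundamentalDomain L F μ)
    (hFd : F ⊆ closedBall 0 d) (hd : 0 ≤ d) (hp : finrank ℝ E < p) (hdR : d < R) :
    (∑' γ : L, rpowTail p R ‖(γ : E)‖) * μ.real F ∈ Icc
      ((1 - d / R) ^ p * (finrank ℝ E * μ.real (ball 0 1) * (R + d) ^ (finrank ℝ E - p) /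
        (p - finrank ℝ E)))
      ((1 + d / R) ^ p * (finrank ℝ E * μ.real (ball 0 1) * (R - d) ^ (finrank ℝ E - p) /
        (p - finrank ℝ E))) := by
  have hp₀ : 0 ≤ p := (Nat.cast_nonneg _).trans hp.le
  have hR : 0 < R := hd.trans_lt hdR
  have hδ : 0 ≤ 1 - d / R := by rw [sub_nonneg, div_le_one hR]; exact hdR.le
  have hup := tsum_rpowTail_mul_measure_le hF hFd hp₀ hdR
  rw [lintegral_rpowTail_norm μ hp (sub_pos.2 hdR),
    ← ENNReal.ofReal_mul (Real.rpow_nonneg (by positivity) _)] at hup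
  have hlow := mul_lintegral_rpowTail_le_tsum_mul_measure hF hFd hp₀ hdR
  rw [lintegral_rpowTail_norm μ hp (by positivity), ← ENNReal.ofReal_mul (Real.rpow_nonneg hδ _)]
    at hlow
  have hfin := ne_top_of_le_ne_top ENNReal.ofReal_ne_top hup
  have hT : ∑' γ : L, rpowTail p R ‖(γ : E)‖ =
      (∑' γ : L, ENNReal.ofReal (rpowTail p R ‖(γ : E)‖)).toReal := by
    rw [ENNReal.tsum_toReal_eq fun _ => ENNReal.ofReal_ne_top]
    exact tsum_congr fun γ => (ENNReal.toReal_ofReal (rpowTail_nonneg _ _ (norm_nonneg _))).symm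
  rw [hT, measureReal_def μ F, ← ENNReal.toReal_mul]
  exact ⟨(ENNReal.ofReal_le_iff_le_toReal hfin).1 hlow,
    ENNReal.toReal_le_of_le_ofReal (by have := sub_pos.2 hp; positivity) hup⟩

end TailSum

lemma Submodule.tsum_subtype_mem_ne_zero_norm_rpow {E : Type*} [NormedAddCommGroup E]
    (L : Submodule ℤ E) {q : ℝ} (hq : q ≠ 0) :
    ∑' γ : {γ : E // γ ∈ L ∧ γ ≠ 0}, ‖(γ : E)‖ ^ q = ∑' γ : L, ‖(γ : E)‖ ^ q :=
  -- `0 ^ q = 0` for `q ≠ 0`, so adding the origin does not change the sum.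
  tsum_subtype_and_ne_zero (L : Set E) (f := fun γ : E => ‖γ‖ ^ q)
    (by rw [norm_zero, Real.zero_rpow hq])

section Lattice

variable {E : Type*} [NormedAddCommGroup E] [NormedSpace ℝ E] [FiniteDimensional ℝ E]
  (L : Submodule ℤ E) [DiscreteTopology L]

lemma Submodule.finite_setOf_norm_le (R : ℝ) : {γ : L | ‖γ‖ ≤ R}.Finite := by
  have hL : IsClosed (L : Set E) := AddSubgroup.isClosed_of_discrete (H := L.toAddSubgroup)
  refine ((finite_isBounded_inter_isClosed DiscreteTopology.isDiscrete
    (isBounded_closedBall (x := (0 : E)) (r := R)) hL).preimage_embedding (.subtype _)).subset ?_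
  intro γ hγ
  simpa using hγ

variable [IsZLattice ℝ L] {p : ℝ}

lemma ZLattice.exists_isAddFundamentalDomain_subset_closedBall [MeasurableSpace E]
    [BorelSpace E] (μ : Measure E) :
    ∃ F : Set E, ∃ d : ℝ, IsAddFundamentalDomain L.toAddSubgroup F μ ∧
      F ⊆ closedBall 0 d ∧ 0 ≤ d := by
  set b := (Free.chooseBasis ℤ L).ofZLatticeBasis ℝ L
  obtain ⟨d, hd⟩ := (ZSpan.fundamentalDomain_isBounded b).subset_closedBall 0
  exact ⟨ZSpan.fundamentalDomain b, max d 0,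
    ZLattice.isAddFundamentalDomain (Free.chooseBasis ℤ L) μ,
    hd.trans (closedBall_subset_closedBall (le_max_left _ _)), le_max_right _ _⟩

lemma tsum_norm_rpow_eq_sum_add_tsum_rpowTail (hp : finrank ℝ E < p) (R : ℝ) :
    ∑' γ : L, ‖(γ : E)‖ ^ (-p) = ∑ γ ∈ (L.finite_setOf_norm_le R).toFinset, ‖(γ : E)‖ ^ (-p) +
      ∑' γ : L, rpowTail p R ‖(γ : E)‖ := by
  have hsum : Summable fun γ : L => ‖(γ : E)‖ ^ (-p) :=
    ZLattice.summable_norm_rpow L (-p) (by rw [ZLattice.rank ℝ L]; linarith)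
  rw [← hsum.sum_add_tsum_compl (s := (L.finite_setOf_norm_le R).toFinset),
    tsum_subtype _ fun γ : L => ‖(γ : E)‖ ^ (-p)]
  congr 1
  refine tsum_congr fun γ => ?_
  rcases le_or_gt ‖(γ : E)‖ R with hγ | hγ
  · simp [rpowTail_of_le hγ, hγ]
  · simp [rpowTail_of_lt hγ, hγ.not_ge]

variable [Nontrivial E] [MeasurableSpace E] [BorelSpace E] {μ : Measure E} [μ.IsAddHaarMeasure]
  {F : Set E} {d R s : ℝ}

theorem sub_one_mul_tsum_norm_rpow_mem_Icc (hF : IsAddFundamentalDomain L.toAddSubgroup F μ)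
    (hFd : F ⊆ closedBall 0 d) (hd : 0 ≤ d) (hdR : d < R) (hs : 1 < s) :
    (s - 1) * ∑' γ : L, ‖(γ : E)‖ ^ (-(finrank ℝ E * s)) ∈ Icc
      ((1 - d / R) ^ (finrank ℝ E * s) * (R + d) ^ (finrank ℝ E - finrank ℝ E * s) *
        (μ.real (ball 0 1) / μ.real F))
      ((s - 1) * ∑ γ ∈ (L.finite_setOf_norm_le R).toFinset, ‖(γ : E)‖ ^ (-(finrank ℝ E * s)) +
        (1 + d / R) ^ (finrank ℝ E * s) * (R - d) ^ (finrank ℝ E - finrank ℝ E * s) *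
          (μ.real (ball 0 1) / μ.real F)) := by
  have : Countable L.toAddSubgroup := inferInstanceAs (Countable L)
  set n : ℝ := (finrank ℝ E : ℝ)
  have hn : 0 < n := Nat.cast_pos.2 finrank_pos
  have hp : n < n * s := lt_mul_of_one_lt_right hn hs
  have hF₀ : 0 < μ.real F := by
    refine ENNReal.toReal_pos (hF.measure_ne_zero (NeZero.ne μ)) ?_
    exact ((measure_mono hFd).trans_lt measure_closedBall_lt_top).ne
  have hscale : ∀ X Y : ℝ, (s - 1) * (X * (n * μ.real (ball 0 1) * Y / (n * s - n))) / μ.real F =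
      X * Y * (μ.real (ball 0 1) / μ.real F) := by
    intro X Y
    have : s - 1 ≠ 0 := sub_ne_zero.2 hs.ne'
    rw [show n * s - n = n * (s - 1) by ring]
    field_simp
  obtain ⟨hlow, hup⟩ := tsum_rpowTail_mul_measureReal_mem_Icc hF hFd hd hp hdR
  rw [tsum_norm_rpow_eq_sum_add_tsum_rpowTail L hp R, mul_add]
  have hfin : 0 ≤ ∑ γ ∈ (L.finite_setOf_norm_le R).toFinset, ‖(γ : E)‖ ^ (-(n * s)) :=
    Finset.sum_nonneg fun _ _ => Real.rpow_nonneg (norm_nonneg _) _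
  have hs₀ : 0 ≤ s - 1 := by linarith
  constructor
  · rw [← hscale, mul_div_assoc]
    calc _ ≤ (s - 1) * ∑' γ : L, rpowTail (n * s) R ‖(γ : E)‖ := by
          gcongr
          exact (div_le_iff₀ hF₀).2 hlow
      _ ≤ _ := le_add_of_nonneg_left (mul_nonneg hs₀ hfin)
  · rw [← hscale, mul_div_assoc]
    gcongr
    exact (le_div_iff₀ hF₀).2 hup

variable (μ) in
theorem ZLattice.tendsto_sub_one_mul_tsum_norm_rpow :
    Tendsto (fun s : ℝ => (s - 1) * ∑' γ : {γ : E // γ ∈ L ∧ γ ≠ 0},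
        ‖(γ : E)‖ ^ (-(finrank ℝ E : ℝ) * s))
      (𝓝[>] 1) (𝓝 (μ.real (ball 0 1) / ZLattice.covolume L μ)) := by
  set n : ℝ := (finrank ℝ E : ℝ)
  have hn : 0 < n := Nat.cast_pos.2 finrank_pos
  obtain ⟨F, d, hF, hFd, hd⟩ := ZLattice.exists_isAddFundamentalDomain_subset_closedBall L μ
  rw [ZLattice.covolume_eq_measure_fundamentalDomain L μ hF]
  set C := μ.real (ball 0 1) / μ.real F
  have hZ : (fun s : ℝ => (s - 1) * ∑' γ : L, ‖(γ : E)‖ ^ (-(n * s))) =ᶠ[𝓝[>] 1]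
      fun s => (s - 1) * ∑' γ : {γ : E // γ ∈ L ∧ γ ≠ 0}, ‖(γ : E)‖ ^ (-n * s) := by
    filter_upwards [self_mem_nhdsWithin] with s (hs : 1 < s)
    rw [L.tsum_subtype_mem_ne_zero_norm_rpow (by nlinarith), neg_mul]
  refine Tendsto.congr' hZ (tendsto_of_tendsto_bounds_atTop (lo := fun R => (1 - d / R) ^ n * C)
    (hi := fun R => (1 + d / R) ^ n * C) ?_ ?_ ?_ ?_)
  · simpa [neg_div, ← sub_eq_add_neg] using (tendsto_one_add_div_rpow_atTop (-d) n).mul_const C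
  · simpa using (tendsto_one_add_div_rpow_atTop d n).mul_const C
  · filter_upwards [eventually_gt_atTop d] with R hdR
    have hδ : 0 < 1 - d / R := by rw [sub_pos, div_lt_one (hd.trans_lt hdR)]; exact hdR
    refine ⟨_, ((tendsto_rpow_mul_rpow_nhds_one n hδ (b := R + d) (by linarith)).mul_const
      C).mono_left nhdsWithin_le_nhds, ?_⟩
    filter_upwards [self_mem_nhdsWithin] with s hs
    exact (sub_one_mul_tsum_norm_rpow_mem_Icc L hF hFd hd hdR hs).1
  · filter_upwards [eventually_gt_atTop d] with R hdR
    have hR : 0 < R := hd.trans_lt hdR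
    have hfin := tendsto_sub_one_mul_sum_rpow (L.finite_setOf_norm_le R).toFinset
      (fun γ : L => ‖(γ : E)‖) (neg_ne_zero.2 hn.ne')
    simp only [neg_mul] at hfin
    have hv := (hfin.add ((tendsto_rpow_mul_rpow_nhds_one n (a := 1 + d / R) (by positivity)
      (sub_pos.2 hdR)).mul_const C)).mono_left (nhdsWithin_le_nhds (s := Ioi 1))
    rw [zero_add] at hv
    refine ⟨_, hv, ?_⟩
    filter_upwards [self_mem_nhdsWithin] with s hs
    exact (sub_one_mul_tsum_norm_rpow_mem_Icc L hF hFd hd hdR hs).2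

end Lattice

theorem Complex.covolume_span_basis (b : Basis (Fin 2) ℝ ℂ) :
    ZLattice.covolume (Submodule.span ℤ (range b)) = |((starRingEnd ℂ) (b 0) * b 1).im| := by
  have hunit : volume (ZSpan.fundamentalDomain basisOneI) = 1 := by
    rw [measure_congr (ZSpan.fundamentalDomain_ae_parallelepiped basisOneI volume),
      ← toBasis_orthonormalBasisOneI]
    exact orthonormalBasisOneI.volume_parallelepiped
  rw [ZLattice.covolume_eq_measure_fundamentalDomain _ _ (ZSpan.isAddFundamentalDomain b volume),
    measureReal_def, ZSpan.measure_fundamentalDomain b volume basisOneI, hunit, mul_one,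
    ENNReal.toReal_ofReal (abs_nonneg _), Basis.det_apply, Matrix.det_fin_two]
  simp [Basis.toMatrix_apply, coe_basisOneI_repr, mul_comm, sub_eq_add_neg]

/-- The Eisenstein series `∑_{γ ∈ Γ \ {0}} |γ|^(-2s)` has residue `1/A` at `s = 1`:
`(s-1) ∑_{γ ∈ Γ \ {0}} |γ|^(-2s) → 1/A` as real `s → 1⁺`. -/
theorem eisenstein_residue_at_one
    (ω₁ ω₂ : ℂ) (hindep : LinearIndependent ℝ ![ω₁, ω₂])
    (Γ : AddSubgroup ℂ) (hΓ : Γ = AddSubgroup.closure {ω₁, ω₂})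
    (A : ℝ) (hA : A = |((starRingEnd ℂ) ω₁ * ω₂).im| / Real.pi) :
    Tendsto
      (fun s : ℝ => (s - 1) * ∑' γ : {γ : ℂ // γ ∈ Γ ∧ γ ≠ 0},
        ‖(γ : ℂ)‖ ^ (-2 * s))
      (nhdsWithin 1 (Set.Ioi 1)) (nhds (1 / A)) := by
  have hcard : Fintype.card (Fin 2) = finrank ℝ ℂ := by simp
  set b := basisOfLinearIndependentOfCardEqFinrank hindep hcard
  have hb : ⇑b = ![ω₁, ω₂] := coe_basisOfLinearIndependentOfCardEqFinrank hindep hcard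
  have hΓb : Γ = (Submodule.span ℤ (range b)).toAddSubgroup := by
    rw [hΓ, Submodule.span_int_eq_addSubgroupClosure, hb, Matrix.range_cons, Matrix.range_cons,
      Matrix.range_empty, union_empty, singleton_union]
  have hcov : ZLattice.covolume (Submodule.span ℤ (range b)) = Real.pi * A := by
    rw [Complex.covolume_span_basis, hA, hb, mul_div_cancel₀ _ Real.pi_ne_zero]
    rfl
  have hball : volume.real (ball (0 : ℂ) 1) = Real.pi := by
    simp [measureReal_def, Complex.volume_ball]
  have h := ZLattice.tendsto_sub_one_mul_tsum_norm_rpow (Submodule.span ℤ (range b)) volume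
  rw [hball, hcov, div_mul_cancel_left₀ Real.pi_ne_zero, ← one_div,
    Complex.finrank_real_complex, Nat.cast_ofNat] at h
  subst hΓb
  exact h
end
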